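/- For a pair (B | A) with A an m×n matrix and B an m×k matrix over R, define its dual (B | A)* over the opposite ring Rᵒᵖ to be ( [Bᵀ; Aᵀ] | [0; Iₙ] ), where Xᵀ denotes the matrix over Rᵒᵖ whose (i,j) entry is the opposite-ring image of the (j,i) entry of X. Then the dual map is an anti-isomorphism up to equivalence: (B | A) ≤ₙ (B' | A') holds over R if and only if (B' | A')* ≤ₙ (B | A)* holds over Rᵒᵖ, and the double dual pair ((B | A)*)* over R is equivalent to (B | A): ((B | A)*)* ≈ₙ (B | A). -/

import Mathlib

/-- `(B | A) ≤ₙ (B' | A')`: there exist matrices `U`, `V`, `G` with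
`U * B = B' * V` and `U * A = A' + B' * G`. -/
def MatPairLE (R : Type*) [Ring R] {m k m' k' n : Type*}
    [Fintype m] [Fintype k']
    (B : Matrix m k R) (A : Matrix m n R)
    (B' : Matrix m' k' R) (A' : Matrix m' n R) : Prop :=
  ∃ (U : Matrix m' m R) (V : Matrix k' k R) (G : Matrix k' n R),
    U * B = B' * V ∧ U * A = A' + B' * G
/-- The matrix over `Rᵒᵖ` whose `(i,j)` entry is the opposite-ring image of the
`(j,i)` entry of `X`. -/
def opTranspose {R : Type*} [Ring R] {m n : Type*} (X : Matrix m n R) :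
    Matrix n m Rᵐᵒᵖ :=
  Matrix.of fun i j => MulOpposite.op (X j i)

/-- The inverse operation, from matrices over `Rᵒᵖ` back to matrices over `R`. -/
def unopTranspose {R : Type*} [Ring R] {m n : Type*} (X : Matrix m n Rᵐᵒᵖ) :
    Matrix n m R :=
  Matrix.of fun i j => (X j i).unop

/-!
Monotonicity of the dual is a direct computation: from `UB = B'V`, `UA = A' + B'G` one gets
the witness `(fromBlocks Vᵀ 0 Gᵀ 1, Uᵀ, 0)` for the dual pairs. The double dual of `(B | A)` is
`([B A; 0 I] | [0; I])` up to `Rᵐᵒᵖᵐᵒᵖ ≃+* R`, and explicit witnesses show it is equivalent to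
`(B | A)`. Order reflection then follows formally: dualizing `(B' | A')* ≤ₙ (B | A)*` once more
and transporting along `Rᵐᵒᵖᵐᵒᵖ ≃+* R` gives `(B | A) ≈ₙ (B | A)** ≤ₙ (B' | A')** ≈ₙ (B' | A')`.
-/

open Matrix

section Transpose

variable {R : Type*} [Ring R] {a b c : Type*}

theorem opTranspose_mul [Fintype b] (X : Matrix a b R) (Y : Matrix b c R) :
    opTranspose (X * Y) = opTranspose Y * opTranspose X := by
  ext i j
  simp [opTranspose, mul_apply, Finset.op_sum]

theorem opTranspose_add (X Y : Matrix a b R) :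
    opTranspose (X + Y) = opTranspose X + opTranspose Y := by
  ext i j
  simp [opTranspose]

end Transpose

/-- The dual of `(B | A)` is `(dualB B A | dualA Rᵐᵒᵖ k n)`. -/
def dualB {R : Type*} [Ring R] {m k n : Type*} (B : Matrix m k R) (A : Matrix m n R) :
    Matrix (k ⊕ n) m Rᵐᵒᵖ :=
  fromRows (opTranspose B) (opTranspose A)

def dualA (R : Type*) [Ring R] (k n : Type*) [DecidableEq n] : Matrix (k ⊕ n) n R :=
  fromRows 0 1

def doubleDualB {R : Type*} [Ring R] {m k n : Type*} [DecidableEq n]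
    (B : Matrix m k R) (A : Matrix m n R) : Matrix (m ⊕ n) (k ⊕ n) R :=
  fromBlocks B A 0 1

section Order

variable {R : Type*} [Ring R] {m k m' k' m'' k'' n : Type*}

theorem MatPairLE.trans [Fintype m] [Fintype m'] [Fintype k'] [Fintype k'']
    {B : Matrix m k R} {A : Matrix m n R} {B' : Matrix m' k' R} {A' : Matrix m' n R}
    {B'' : Matrix m'' k'' R} {A'' : Matrix m'' n R}
    (h : MatPairLE R B A B' A') (h' : MatPairLE R B' A' B'' A'') :
    MatPairLE R B A B'' A'' := by
  obtain ⟨U, V, G, hB, hA⟩ := h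
  obtain ⟨U', V', G', hB', hA'⟩ := h'
  refine ⟨U' * U, V' * V, G' + V' * G, ?_, ?_⟩
  · rw [Matrix.mul_assoc, hB, ← Matrix.mul_assoc, hB', Matrix.mul_assoc]
  · rw [Matrix.mul_assoc, hA, Matrix.mul_add, hA', ← Matrix.mul_assoc, hB', Matrix.mul_add,
      Matrix.mul_assoc, add_assoc]

theorem MatPairLE.map [Fintype m] [Fintype k'] {S F : Type*} [Ring S] [FunLike F R S]
    [RingHomClass F R S] (f : F)
    {B : Matrix m k R} {A : Matrix m n R} {B' : Matrix m' k' R} {A' : Matrix m' n R}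
    (h : MatPairLE R B A B' A') :
    MatPairLE S (B.map f) (A.map f) (B'.map f) (A'.map f) := by
  obtain ⟨U, V, G, hB, hA⟩ := h
  refine ⟨U.map f, V.map f, G.map f, ?_, ?_⟩
  · rw [← Matrix.map_mul, hB, Matrix.map_mul]
  · rw [← Matrix.map_mul, hA, Matrix.map_add _ (map_add f), Matrix.map_mul]

variable [Fintype m] [Fintype n] [DecidableEq n]

theorem MatPairLE.dual [Fintype m'] [Fintype k'] {B : Matrix m k R} {A : Matrix m n R}
    {B' : Matrix m' k' R} {A' : Matrix m' n R} (h : MatPairLE R B A B' A') :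
    MatPairLE Rᵐᵒᵖ (dualB B' A') (dualA Rᵐᵒᵖ k' n) (dualB B A) (dualA Rᵐᵒᵖ k n) := by
  obtain ⟨U, V, G, hB, hA⟩ := h
  refine ⟨fromBlocks (opTranspose V) 0 (opTranspose G) 1, opTranspose U, 0, ?_, ?_⟩
  · simp only [dualB, fromBlocks_mul_fromRows, Matrix.zero_mul, add_zero, Matrix.one_mul,
      fromRows_mul, ← opTranspose_mul, ← opTranspose_add, hB, hA, add_comm]
  · simp [dualA, fromBlocks_mul_fromRows]

theorem matPairLE_doubleDualB [Fintype k] [DecidableEq m] [DecidableEq k]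
    (B : Matrix m k R) (A : Matrix m n R) :
    MatPairLE R B A (doubleDualB B A) (dualA R m n) := by
  refine ⟨fromRows (-1) 0, fromRows (-1) 0, fromRows 0 (-1), ?_, ?_⟩
  · simp [doubleDualB, fromRows_mul, fromBlocks_mul_fromRows]
  · ext (i | i) j <;> simp [doubleDualB, dualA, fromRows_mul, fromBlocks_mul_fromRows]

theorem doubleDualB_matPairLE [Fintype k] [DecidableEq m] [DecidableEq k]
    (B : Matrix m k R) (A : Matrix m n R) :
    MatPairLE R (doubleDualB B A) (dualA R m n) B A := by
  refine ⟨fromCols (-1) A, fromCols (-1) 0, 0, ?_, ?_⟩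
  · simp [doubleDualB, fromCols_mul_fromBlocks, mul_fromCols]
  · simp [dualA, fromCols_mul_fromRows]

end Order

theorem unopTranspose_dual {R : Type*} [Ring R] {m k n : Type*} [DecidableEq n]
    (B : Matrix m k R) (A : Matrix m n R) :
    fromRows (unopTranspose (dualB B A)) (unopTranspose (dualA Rᵐᵒᵖ k n)) =
      doubleDualB B A := by
  ext (i | i) (j | j) <;> simp [unopTranspose, dualB, dualA, doubleDualB, opTranspose,
    one_apply, eq_comm, apply_ite MulOpposite.unop]

theorem dualA_map {R S F : Type*} [Ring R] [Ring S] [FunLike F R S] [RingHomClass F R S] (f : F)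
    (k n : Type*) [DecidableEq n] :
    (dualA R k n).map f = dualA S k n := by
  rw [dualA, fromRows_map, Matrix.map_zero _ (map_zero f),
    Matrix.map_one _ (map_zero f) (map_one f), dualA]

theorem dualB_dualB_map_opOp_symm {R : Type*} [Ring R] {m k n : Type*} [DecidableEq n]
    (B : Matrix m k R) (A : Matrix m n R) :
    (dualB (dualB B A) (dualA Rᵐᵒᵖ k n)).map (RingEquiv.opOp R).symm = doubleDualB B A := by
  ext (i | i) (j | j) <;> simp [dualB, dualA, doubleDualB, opTranspose, one_apply, eq_comm,
    apply_ite MulOpposite.unop]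

theorem MatPairLE.of_dual {R : Type*} [Ring R] {m k m' k' n : Type*}
    [Fintype m] [Fintype k] [Fintype m'] [Fintype k'] [Fintype n]
    [DecidableEq m] [DecidableEq k] [DecidableEq m'] [DecidableEq k'] [DecidableEq n]
    {B : Matrix m k R} {A : Matrix m n R} {B' : Matrix m' k' R} {A' : Matrix m' n R}
    (h : MatPairLE Rᵐᵒᵖ (dualB B' A') (dualA Rᵐᵒᵖ k' n) (dualB B A) (dualA Rᵐᵒᵖ k n)) :
    MatPairLE R B A B' A' := by
  have hdouble := h.dual.map (RingEquiv.opOp R).symm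
  rw [dualB_dualB_map_opOp_symm, dualB_dualB_map_opOp_symm, dualA_map, dualA_map] at hdouble
  exact (matPairLE_doubleDualB B A).trans (hdouble.trans (doubleDualB_matPairLE B' A'))

/-- The dual map `(B | A) ↦ ([Bᵀ; Aᵀ] | [0; Iₙ])` is an anti-isomorphism up to
equivalence: it is order-reversing in both directions, and the double dual of a pair
is equivalent to the pair itself. -/
theorem dual_anti_isomorphism {R : Type*} [Ring R] {m k m' k' n : ℕ}
    (B : Matrix (Fin m) (Fin k) R) (A : Matrix (Fin m) (Fin n) R)
    (B' : Matrix (Fin m') (Fin k') R) (A' : Matrix (Fin m') (Fin n) R) :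
    (MatPairLE R B A B' A' ↔
      MatPairLE Rᵐᵒᵖ
        (Matrix.fromRows (opTranspose B') (opTranspose A'))
        (Matrix.fromRows (0 : Matrix (Fin k') (Fin n) Rᵐᵒᵖ)
          (1 : Matrix (Fin n) (Fin n) Rᵐᵒᵖ))
        (Matrix.fromRows (opTranspose B) (opTranspose A))
        (Matrix.fromRows (0 : Matrix (Fin k) (Fin n) Rᵐᵒᵖ)
          (1 : Matrix (Fin n) (Fin n) Rᵐᵒᵖ))) ∧
    (MatPairLE R
        (Matrix.fromRows
          (unopTranspose (Matrix.fromRows (opTranspose B) (opTranspose A)))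
          (unopTranspose (Matrix.fromRows (0 : Matrix (Fin k) (Fin n) Rᵐᵒᵖ)
            (1 : Matrix (Fin n) (Fin n) Rᵐᵒᵖ))))
        (Matrix.fromRows (0 : Matrix (Fin m) (Fin n) R)
          (1 : Matrix (Fin n) (Fin n) R))
        B A ∧
      MatPairLE R B A
        (Matrix.fromRows
          (unopTranspose (Matrix.fromRows (opTranspose B) (opTranspose A)))
          (unopTranspose (Matrix.fromRows (0 : Matrix (Fin k) (Fin n) Rᵐᵒᵖ)
            (1 : Matrix (Fin n) (Fin n) Rᵐᵒᵖ))))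
        (Matrix.fromRows (0 : Matrix (Fin m) (Fin n) R)
          (1 : Matrix (Fin n) (Fin n) R))) := by
  have hdouble := unopTranspose_dual B A
  simp only [dualB, dualA] at hdouble
  rw [hdouble]
  exact ⟨⟨MatPairLE.dual, MatPairLE.of_dual⟩, doubleDualB_matPairLE B A,
    matPairLE_doubleDualB B A⟩
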